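/- arXiv:1808.01274 — 2 statements merged into one kernel-verified Lean document; each statement's English description precedes it below -/
import Mathlib

section
/- Let Y_1, Y_2, ... be i.i.d. real random variables with common CDF F, let q ∈ (0,1), and suppose x₀ is such that F(x₀) ≥ q and F(x₀ + ε) > q for every ε > 0 (i.e., x₀ is the unique q-quantile in the sense that F exceeds q strictly to the right of x₀ and F(x) < q for x < x₀). Then the sample quantile ξ_n(q) = inf{x : F_n(x) ≥ q}, where F_n is the empirical CDF, converges almost surely to x₀ as n → ∞. -/
/-!
By the strong law of large numbers applied to the indicators `1{Y i ≤ r}`, almost surely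
`F_n r → F r` simultaneously for all rationals `r`. Since `F_n` is monotone, `F_n a < q ≤ F_n b`
traps `ξ_n` in `[a, b]`; for rationals `a < x₀ < b` we have `F a < q < F b`, so this holds for all
large `n`, and `a`, `b` can be taken arbitrarily close to `x₀`.
-/

open MeasureTheory ProbabilityTheory Filter Set Topology

theorem Monotone.csInf_setOf_le_mem_Icc {α β : Type*} [ConditionallyCompleteLinearOrder α]
    [Preorder β] {G : α → β} (hG : Monotone G) {a b : α} {q : β} (ha : G a < q) (hb : q ≤ G b) :
    sInf {x | q ≤ G x} ∈ Icc a b := by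
  have hlower : a ∈ lowerBounds {x | q ≤ G x} := fun x hx =>
    le_of_not_gt fun hxa => (hx.trans (hG hxa.le)).not_gt ha
  exact ⟨le_csInf ⟨b, hb⟩ hlower, csInf_le ⟨a, hlower⟩ hb⟩

theorem tendsto_csInf_setOf_le {α β : Type*} [ConditionallyCompleteLinearOrder α]
    [TopologicalSpace α] [OrderTopology α] [DenselyOrdered α] [NoMinOrder α] [NoMaxOrder α]
    [LinearOrder β] [TopologicalSpace β] [OrderClosedTopology β]
    {G : ℕ → α → β} {H : α → β} {D : Set α} {q : β} {x₀ : α}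
    (hmono : ∀ n, Monotone (G n)) (hD : Dense D)
    (hconv : ∀ x ∈ D, Tendsto (fun n => G n x) atTop (𝓝 (H x)))
    (h_left : ∀ x < x₀, H x < q) (h_right : ∀ x, x₀ < x → q < H x) :
    Tendsto (fun n => sInf {x | q ≤ G n x}) atTop (𝓝 x₀) := by
  refine (nhds_basis_Ioo x₀).tendsto_right_iff.2 fun ⟨a', b'⟩ ⟨ha', hb'⟩ => ?_
  obtain ⟨a, haD, ha⟩ := hD.exists_between ha'
  obtain ⟨b, hbD, hb⟩ := hD.exists_between hb'
  filter_upwards [(hconv a haD).eventually (eventually_lt_nhds (h_left a ha.2)),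
    (hconv b hbD).eventually (eventually_gt_nhds (h_right b hb.1))] with n hna hnb
  have hmem := (hmono n).csInf_setOf_le_mem_Icc hna hnb.le
  exact ⟨ha.1.trans_le hmem.1, hmem.2.trans_lt hb.2⟩

theorem strong_law_ae_frequency {Ω E : Type*} [MeasurableSpace Ω] [MeasurableSpace E]
    {μ : Measure Ω} [IsFiniteMeasure μ] (Y : ℕ → Ω → E)
    (hindep : Pairwise fun i j => IndepFun (Y i) (Y j) μ)
    (hident : ∀ i, IdentDistrib (Y i) (Y 0) μ μ) {S : Set E} (hS : MeasurableSet S) :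
    ∀ᵐ ω ∂μ, Tendsto (fun n : ℕ => (∑ i ∈ Finset.range n, S.indicator (1 : E → ℝ) (Y i ω)) / n)
      atTop (𝓝 (μ.real (Y 0 ⁻¹' S))) := by
  have hind : Measurable (S.indicator (1 : E → ℝ)) := measurable_one.indicator hS
  have hY₀ : AEMeasurable (Y 0) μ := (hident 0).aemeasurable_fst
  have hint : Integrable (S.indicator (1 : E → ℝ)) (μ.map (Y 0)) :=
    (integrable_const (1 : ℝ)).indicator hS
  have hmean : ∫ ω, S.indicator (1 : E → ℝ) (Y 0 ω) ∂μ = μ.real (Y 0 ⁻¹' S) := by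
    rw [← integral_map hY₀ hind.aestronglyMeasurable, integral_indicator_one hS,
      map_measureReal_apply_of_aemeasurable hY₀ hS]
  simpa only [hmean, Function.comp_apply] using strong_law_ae_real (fun i => S.indicator 1 ∘ Y i)
    (hint.comp_aemeasurable hY₀) (fun i j hij => (hindep hij).comp hind hind)
    (fun i => (hident i).comp hind)

theorem sample_quantile_strong_consistency_general
    {Ω : Type*} [MeasurableSpace Ω] (μ : Measure Ω) [IsProbabilityMeasure μ]
    (Y : ℕ → Ω → ℝ) (hmeas : ∀ i, Measurable (Y i))
    (hindep : iIndepFun Y μ)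
    (hident : ∀ i, Measure.map (Y i) μ = Measure.map (Y 0) μ)
    (F : ℝ → ℝ) (hF : ∀ x, F x = (μ {ω | Y 0 ω ≤ x}).toReal)
    (q : ℝ) (x₀ : ℝ)
    (h_right : ∀ ε > 0, F (x₀ + ε) > q)
    (h_left : ∀ ε > 0, F (x₀ - ε) < q)
    (Fn : ℕ → ℝ → Ω → ℝ)
    (hFn : ∀ n x ω, Fn n x ω = (1 / (n:ℝ)) * ∑ i ∈ Finset.range n, if Y i ω ≤ x then (1:ℝ) else 0)
    (ξn : ℕ → Ω → ℝ)
    (hξn : ∀ n ω, ξn n ω = sInf {x | Fn n x ω ≥ q}) :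
    ∀ᵐ ω ∂μ, Tendsto (fun n => ξn n ω) atTop (nhds x₀) := by
  have hFn_indicator : ∀ n x ω,
      Fn n x ω = (∑ i ∈ Finset.range n, (Iic x).indicator 1 (Y i ω)) / n := by
    intro n x ω
    simp [hFn, Set.indicator, div_eq_inv_mul]
  have hFn_mono : ∀ n ω, Monotone fun x => Fn n x ω := fun n ω x y hxy => by
    simp only [hFn_indicator]
    gcongr
    exact zero_le_one
  have hlln : ∀ x, ∀ᵐ ω ∂μ, Tendsto (fun n => Fn n x ω) atTop (𝓝 (F x)) := fun x => by
    have hFx : F x = μ.real (Y 0 ⁻¹' Iic x) := hF x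
    simpa only [hFn_indicator, hFx] using strong_law_ae_frequency Y
      (fun i j hij => hindep.indepFun hij)
      (fun i => ⟨(hmeas i).aemeasurable, (hmeas 0).aemeasurable, hident i⟩) measurableSet_Iic
  have hlln_rat : ∀ᵐ ω ∂μ, ∀ r : ℚ, Tendsto (fun n => Fn n r ω) atTop (𝓝 (F r)) :=
    ae_all_iff.2 fun r => hlln r
  filter_upwards [hlln_rat] with ω hω
  simp only [hξn]
  exact tendsto_csInf_setOf_le (fun n => hFn_mono n ω) Rat.denseRange_cast
    (forall_mem_range.2 hω) (fun x hx => by simpa using h_left (x₀ - x) (sub_pos.2 hx))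
    (fun x hx => by simpa using h_right (x - x₀) (sub_pos.2 hx))

theorem sample_quantile_strong_consistency
    {Ω : Type*} [MeasurableSpace Ω] (μ : Measure Ω) [IsProbabilityMeasure μ]
    (Y : ℕ → Ω → ℝ) (hmeas : ∀ i, Measurable (Y i))
    (hindep : iIndepFun Y μ)
    (hident : ∀ i, Measure.map (Y i) μ = Measure.map (Y 0) μ)
    (F : ℝ → ℝ) (hF : ∀ x, F x = (μ {ω | Y 0 ω ≤ x}).toReal)
    (q : ℝ) (hq : q ∈ Ioo (0:ℝ) 1) (x₀ : ℝ)
    (hx₀ : F x₀ ≥ q)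
    (h_right : ∀ ε > 0, F (x₀ + ε) > q)
    (h_left : ∀ ε > 0, F (x₀ - ε) < q)
    (Fn : ℕ → ℝ → Ω → ℝ)
    (hFn : ∀ n x ω, Fn n x ω = (1 / (n:ℝ)) * ∑ i ∈ Finset.range n, if Y i ω ≤ x then (1:ℝ) else 0)
    (ξn : ℕ → Ω → ℝ)
    (hξn : ∀ n ω, ξn n ω = sInf {x | Fn n x ω ≥ q}) :
    ∀ᵐ ω ∂μ, Tendsto (fun n => ξn n ω) atTop (nhds x₀) :=
  sample_quantile_strong_consistency_general μ Y hmeas hindep hident F hF q x₀ h_right h_left Fn hFn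
    ξn hξn
end

section
/- Let Z have the Gamma(α, β) distribution with α > 1 and rate β > 0, with density f(x) = β^α/Γ(α) · x^{α-1} e^{-βx} for x > 0. Then for all x ≥ 1, the ratio (1 - F(x))/f(x) is bounded above by 2^{α-1}/β + 2^{α-1} Γ(α)/(β^α x^{α-1}), where F is the CDF and Γ the gamma function. -/
open Real Set MeasureTheory

/-!
Since the density integrates to one, `1 - F x = c * ∫_x^∞ t^(α-1) e^(-βt) dt` with
`c = β^α / Γ(α)`. Substituting `t = x + s` turns the integral into
`e^(-βx) ∫_0^∞ (x+s)^(α-1) e^(-βs) ds`, and `(x+s)^(α-1) ≤ 2^(α-1) (x^(α-1) + s^(α-1))` bounds it by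
`2^(α-1) e^(-βx) (Γ(α)/β^α + x^(α-1)/β)`. Dividing by `f x = c x^(α-1) e^(-βx)` gives the bound.
-/

lemma Real.add_rpow_le_two_rpow_mul_rpow_add_rpow {a b p : ℝ} (ha : 0 ≤ a) (hb : 0 ≤ b)
    (hp : 0 ≤ p) : (a + b) ^ p ≤ 2 ^ p * (a ^ p + b ^ p) := calc
  (a + b) ^ p ≤ (2 * max a b) ^ p := by
    rw [two_mul]; gcongr
    exacts [le_max_left a b, le_max_right a b]
  _ = 2 ^ p * max (a ^ p) (b ^ p) := by
    rw [mul_rpow zero_le_two (ha.trans (le_max_left a b)), rpow_max ha hb hp]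
  _ ≤ 2 ^ p * (a ^ p + b ^ p) := by
    gcongr; exact max_le_add_of_nonneg (by positivity) (by positivity)

lemma integral_Ioi_comp_add_right {E : Type*} [NormedAddCommGroup E] [NormedSpace ℝ E]
    (f : ℝ → E) (c d : ℝ) :
    ∫ x in Ioi c, f (x + d) = ∫ x in Ioi (c + d), f x := by
  have h := (measurePreserving_add_right volume d).setIntegral_preimage_emb
    (measurableEmbedding_addRight d) f (Ioi (c + d))
  rwa [preimage_add_const_Ioi, add_sub_cancel_right] at h

section GammaIntegral

variable {α β : ℝ}

lemma integrableOn_rpow_mul_exp_neg_mul_Ioi (hα : 0 < α) (hβ : 0 < β) :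
    IntegrableOn (fun t ↦ t ^ (α - 1) * exp (-β * t)) (Ioi 0) := by
  simpa only [rpow_one] using
    integrableOn_rpow_mul_exp_neg_mul_rpow (by linarith : -1 < α - 1) one_pos hβ

lemma integral_rpow_mul_exp_neg_mul_Ioi' (hα : 0 < α) (hβ : 0 < β) :
    ∫ t in Ioi 0, t ^ (α - 1) * exp (-β * t) = Gamma α / β ^ α := by
  simp_rw [neg_mul]
  rw [integral_rpow_mul_exp_neg_mul_Ioi hα hβ, one_div, inv_rpow hβ.le, inv_mul_eq_div]

lemma integral_exp_neg_mul_Ioi (hβ : 0 < β) (x : ℝ) :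
    ∫ t in Ioi x, exp (-β * t) = exp (-β * x) / β := by
  rw [integral_exp_mul_Ioi (neg_neg_of_pos hβ), neg_div_neg_eq]

lemma integral_rpow_mul_exp_neg_mul_Ioi_le (hα : 1 ≤ α) (hβ : 0 < β) {x : ℝ} (hx : 0 ≤ x) :
    ∫ t in Ioi x, t ^ (α - 1) * exp (-β * t) ≤
      2 ^ (α - 1) * exp (-β * x) * (Gamma α / β ^ α + x ^ (α - 1) / β) := by
  have hα0 : 0 < α := by linarith
  have hα1 : 0 ≤ α - 1 := by linarith
  have hshift : ∫ t in Ioi x, t ^ (α - 1) * exp (-β * t) =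
      ∫ s in Ioi 0, exp (-β * x) * ((s + x) ^ (α - 1) * exp (-β * s)) := by
    rw [← zero_add x, ← integral_Ioi_comp_add_right, zero_add]
    refine setIntegral_congr_fun measurableSet_Ioi fun s _ ↦ ?_
    rw [mul_add, exp_add]; ring
  have hmajorant : IntegrableOn (fun s ↦ 2 ^ (α - 1) * exp (-β * x) *
      (s ^ (α - 1) * exp (-β * s) + x ^ (α - 1) * exp (-β * s))) (Ioi 0) :=
    ((integrableOn_rpow_mul_exp_neg_mul_Ioi hα0 hβ).add
      ((exp_neg_integrableOn_Ioi 0 hβ).const_mul _)).const_mul _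
  rw [hshift]
  calc ∫ s in Ioi 0, exp (-β * x) * ((s + x) ^ (α - 1) * exp (-β * s))
      ≤ ∫ s in Ioi 0, 2 ^ (α - 1) * exp (-β * x) *
          (s ^ (α - 1) * exp (-β * s) + x ^ (α - 1) * exp (-β * s)) := by
        refine integral_mono_of_nonneg ?_ hmajorant ?_
        all_goals
          refine (ae_restrict_iff' measurableSet_Ioi).mpr (.of_forall fun s (hs : 0 < s) ↦ ?_)
        · positivity
        · calc exp (-β * x) * ((s + x) ^ (α - 1) * exp (-β * s))
              ≤ exp (-β * x) * (2 ^ (α - 1) * (s ^ (α - 1) + x ^ (α - 1)) * exp (-β * s)) := by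
                gcongr; exact add_rpow_le_two_rpow_mul_rpow_add_rpow hs.le hx hα1
            _ = _ := by ring
    _ = 2 ^ (α - 1) * exp (-β * x) * (Gamma α / β ^ α + x ^ (α - 1) / β) := by
        rw [integral_const_mul, integral_add (integrableOn_rpow_mul_exp_neg_mul_Ioi hα0 hβ)
          ((exp_neg_integrableOn_Ioi 0 hβ).const_mul _), integral_const_mul,
          integral_rpow_mul_exp_neg_mul_Ioi' hα0 hβ, integral_exp_neg_mul_Ioi hβ,
          mul_zero, exp_zero, mul_one_div]

lemma one_sub_integral_Ioc_gamma_density (hα : 0 < α) (hβ : 0 < β) {x : ℝ} (hx : 0 ≤ x) :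
    1 - ∫ t in Ioc 0 x, β ^ α / Gamma α * (t ^ (α - 1) * exp (-β * t)) =
      β ^ α / Gamma α * ∫ t in Ioi x, t ^ (α - 1) * exp (-β * t) := by
  have hint := integrableOn_rpow_mul_exp_neg_mul_Ioi hα hβ
  have hmass : β ^ α / Gamma α * ∫ t in Ioi 0, t ^ (α - 1) * exp (-β * t) = 1 := by
    rw [integral_rpow_mul_exp_neg_mul_Ioi' hα hβ]
    field_simp [(Gamma_pos_of_pos hα).ne', (rpow_pos_of_pos hβ α).ne']
  rw [integral_const_mul, ← intervalIntegral.integral_of_le hx]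
  calc 1 - β ^ α / Gamma α * ∫ t in 0..x, t ^ (α - 1) * exp (-β * t)
      = β ^ α / Gamma α * ((∫ t in Ioi 0, t ^ (α - 1) * exp (-β * t)) -
          ∫ t in 0..x, t ^ (α - 1) * exp (-β * t)) := by rw [mul_sub, hmass]
    _ = β ^ α / Gamma α * ∫ t in Ioi x, t ^ (α - 1) * exp (-β * t) := by
      rw [← intervalIntegral.integral_Ioi_sub_Ioi hint hx, sub_sub_cancel]

end GammaIntegral

theorem gamma_mills_ratio_bound
    (α β : ℝ) (hα : 1 < α) (hβ : 0 < β)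
    (f : ℝ → ℝ) (hf : ∀ x, f x = β ^ α / Real.Gamma α * (x ^ (α - 1) * exp (-β * x)))
    (F : ℝ → ℝ) (hF : ∀ x, F x = ∫ t in Ioc (0:ℝ) x, f t) :
    ∀ x ≥ (1:ℝ),
      (1 - F x) / f x ≤ 2 ^ (α - 1) / β + 2 ^ (α - 1) * Real.Gamma α / (β ^ α * x ^ (α - 1)) := by
  intro x hx
  have hx0 : 0 < x := one_pos.trans_le hx
  have hΓ : 0 < Gamma α := Gamma_pos_of_pos (one_pos.trans hα)
  have hβα : 0 < β ^ α := rpow_pos_of_pos hβ α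
  have hxα : 0 < x ^ (α - 1) := rpow_pos_of_pos hx0 _
  simp only [hF, hf]
  rw [one_sub_integral_Ioc_gamma_density (one_pos.trans hα) hβ hx0.le,
    mul_div_mul_left _ _ (div_pos hβα hΓ).ne', div_le_iff₀ (by positivity)]
  calc ∫ t in Ioi x, t ^ (α - 1) * exp (-β * t)
      ≤ 2 ^ (α - 1) * exp (-β * x) * (Gamma α / β ^ α + x ^ (α - 1) / β) :=
        integral_rpow_mul_exp_neg_mul_Ioi_le hα.le hβ hx0.le
    _ = _ := by field_simp; ring
end
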